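/- Let α be a graphic degree sequence of length n and let i ≠ j be indices with α_i ≥ 1 and α_j ≥ 1. The edge {i,j} is forbidden for α if and only if the sequence ⊖_{i,j} α, obtained from α by subtracting 1 from the entries at indices i and j, is not graphic. -/

import Mathlib

/-!
Deleting `ij` from a realization of `α` realizes `⊖_{i,j} α`. Conversely, let `G` realize `α`
without `ij` and `H` realize `⊖_{i,j} α`. If `ij ∉ H`, add it to `H`. Otherwise `i` has one more
neighbour in `G` than in `H`, so some `c ≠ j` is a `G`-neighbour but not an `H`-neighbour of `i`.
If `deg_H j ≤ deg_H c`, a two-switch in `H` trades `ij` for `ic`, and `ij` can then be added;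
if not, `α c ≤ α j` and a two-switch in `G` trades `ic` for `ij`. Such two-switches exist
because `p ~ c`, `p ≁ b` and `deg c ≤ deg b` force a neighbour `z ≠ c` of `b` with `c ≁ z`,
and then `pc, bz ↦ pb, cz` preserves all degrees.
-/

/-- `G` is a (labeled) realization of the degree sequence `α` if the degree of
vertex `v` in `G` equals `α v` for every `v`. -/
def IsRealization {n : ℕ} (α : Fin n → ℕ) (G : SimpleGraph (Fin n)) : Prop :=
  ∀ v : Fin n, (G.neighborSet v).ncard = α v

/-- A sequence is graphic if it has a realization. -/
def Graphic {n : ℕ} (α : Fin n → ℕ) : Prop :=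
  ∃ G : SimpleGraph (Fin n), IsRealization α G

/-- The edge `{i,j}` is forced for `α` if it lies in every realization of `α`. -/
def ForcedEdge {n : ℕ} (α : Fin n → ℕ) (i j : Fin n) : Prop :=
  ∀ G : SimpleGraph (Fin n), IsRealization α G → G.Adj i j

/-- The edge `{i,j}` is forbidden for `α` if it lies in no realization of `α`. -/
def ForbiddenEdge {n : ℕ} (α : Fin n → ℕ) (i j : Fin n) : Prop :=
  ∀ G : SimpleGraph (Fin n), IsRealization α G → ¬ G.Adj i j

/-- `α` majorizes `β`: every partial sum of `α` is at least the corresponding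
partial sum of `β`, and the total sums agree. -/
def Majorizes {n : ℕ} (α β : Fin n → ℕ) : Prop :=
  (∀ k : ℕ, k ≤ n →
    ∑ i ∈ Finset.univ.filter (fun i : Fin n => (i : ℕ) < k), β i ≤
    ∑ i ∈ Finset.univ.filter (fun i : Fin n => (i : ℕ) < k), α i) ∧
  ∑ i, α i = ∑ i, β i

namespace SimpleGraph

variable {V : Type*} (G : SimpleGraph V) {a b c d p : V}

def twoSwitch (a b c d : V) : SimpleGraph V :=
  (G \ edge a b) \ edge c d ⊔ edge a c ⊔ edge b d

lemma ncard_neighborSet_edge [DecidableEq V] (hab : a ≠ b) (v : V) :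
    ((edge a b).neighborSet v).ncard = if v = a ∨ v = b then 1 else 0 := by
  by_cases hva : v = a
  · subst hva
    have : (edge v b).neighborSet v = {b} := by ext; grind [mem_neighborSet]
    simp [this]
  by_cases hvb : v = b
  · subst hvb
    have : (edge a v).neighborSet v = {a} := by ext; grind [mem_neighborSet]
    simp [this]
  have : (edge a b).neighborSet v = ∅ := by ext; simp [edge_adj, hva, hvb]
  simp [this, hva, hvb]

variable [Finite V]

lemma ncard_neighborSet_sup_edge [DecidableEq V] (h : ¬G.Adj a b) (hab : a ≠ b) (v : V) :
    ((G ⊔ edge a b).neighborSet v).ncard =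
      (G.neighborSet v).ncard + if v = a ∨ v = b then 1 else 0 := by
  rw [neighborSet_sup, Set.ncard_union_eq (disjoint_neighborSet.mpr (G.disjoint_edge.mpr h) v),
    ncard_neighborSet_edge hab]

lemma ncard_neighborSet_sdiff_edge [DecidableEq V] (h : G.Adj a b) (v : V) :
    ((G \ edge a b).neighborSet v).ncard + (if v = a ∨ v = b then 1 else 0) =
      (G.neighborSet v).ncard := by
  rw [neighborSet_sdiff, ← ncard_neighborSet_edge (G.ne_of_adj h),
    Set.ncard_sdiff_add_ncard_of_subset (neighborSet_mono (G.edge_le_iff.mpr (Or.inr h)) v)]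

lemma ncard_neighborSet_twoSwitch (hab : G.Adj a b) (hcd : G.Adj c d) (hac : ¬G.Adj a c)
    (hbd : ¬G.Adj b d) (hac' : a ≠ c) (hbd' : b ≠ d) (v : V) :
    ((G.twoSwitch a b c d).neighborSet v).ncard = (G.neighborSet v).ncard := by
  classical
  have hbc : b ≠ c := by rintro rfl; exact hac hab
  have h₁ : (G \ edge a b).Adj c d := by
    simp [sdiff_adj, edge_adj, hcd, hac'.symm, hbc.symm]
  have h₂ : ¬((G \ edge a b) \ edge c d).Adj a c := by simp [sdiff_adj, hac]
  have h₃ : ¬((G \ edge a b) \ edge c d ⊔ edge a c).Adj b d := by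
    simp [sdiff_adj, edge_adj, hbd, hbc, hab.ne.symm]
  have had : a ≠ d := by rintro rfl; exact hac hcd.symm
  have e₁ := ncard_neighborSet_sdiff_edge G hab v
  have e₂ := ncard_neighborSet_sdiff_edge _ h₁ v
  have e₃ := ncard_neighborSet_sup_edge _ h₂ hac' v
  have e₄ := ncard_neighborSet_sup_edge _ h₃ hbd' v
  rw [twoSwitch, e₄, e₃]
  by_cases hva : v = a <;> by_cases hvb : v = b <;> by_cases hvc : v = c <;>
    by_cases hvd : v = d <;> simp_all

lemma exists_adj_ne_not_adj_of_ncard_le (hpc : G.Adj p c) (hpb : ¬G.Adj p b) (hbp : b ≠ p)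
    (hd : (G.neighborSet c).ncard ≤ (G.neighborSet b).ncard) :
    ∃ z, G.Adj b z ∧ z ≠ c ∧ ¬G.Adj c z := by
  by_contra! h
  have hsub : G.neighborSet b \ {c} ⊂ G.neighborSet c \ {b} := by
    refine (Set.ssubset_iff_of_subset ?_).mpr
      ⟨p, ⟨hpc.symm, hbp.symm⟩, fun hp => hpb hp.1.symm⟩
    rintro z ⟨hbz, hzc⟩
    exact ⟨h z hbz hzc, (G.ne_of_adj hbz).symm⟩
  have hlt : (G.neighborSet b \ {c}).ncard < (G.neighborSet c \ {b}).ncard :=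
    Set.ncard_lt_ncard hsub
  by_cases hbc : G.Adj b c
  · rw [Set.ncard_sdiff_singleton_of_mem (show c ∈ G.neighborSet b from hbc),
      Set.ncard_sdiff_singleton_of_mem (show b ∈ G.neighborSet c from hbc.symm)] at hlt
    omega
  · rw [Set.sdiff_singleton_eq_self (show c ∉ G.neighborSet b from hbc),
      Set.sdiff_singleton_eq_self (show b ∉ G.neighborSet c from mt G.adj_symm hbc)] at hlt
    omega

lemma exists_ncard_neighborSet_eq_adj_not_adj (hpc : G.Adj p c) (hpb : ¬G.Adj p b)
    (hbp : b ≠ p) (hd : (G.neighborSet c).ncard ≤ (G.neighborSet b).ncard) :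
    ∃ G' : SimpleGraph V, (∀ v, (G'.neighborSet v).ncard = (G.neighborSet v).ncard) ∧
      G'.Adj p b ∧ ¬G'.Adj p c := by
  obtain ⟨z, hbz, hzc, hcz⟩ := G.exists_adj_ne_not_adj_of_ncard_le hpc hpb hbp hd
  refine ⟨G.twoSwitch p c b z,
    G.ncard_neighborSet_twoSwitch hpc hbz hpb hcz hbp.symm hzc.symm, ?_, ?_⟩
  · simp [twoSwitch, edge_adj, hbp.symm]
  · have hcb : c ≠ b := by rintro rfl; exact hpb hpc
    have hpz : p ≠ z := by rintro rfl; exact hpb hbz.symm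
    simp [twoSwitch, sdiff_adj, edge_adj, hcb, hpz, hbp.symm, G.ne_of_adj hpc]

end SimpleGraph

open SimpleGraph

/-- The sequence `⊖_{i,j} α`. -/
def decrement {n : ℕ} (α : Fin n → ℕ) (i j : Fin n) : Fin n → ℕ :=
  fun v => if v = i ∨ v = j then α v - 1 else α v

section Realization

variable {n : ℕ} {α : Fin n → ℕ} {i j : Fin n} {G : SimpleGraph (Fin n)}

lemma IsRealization.sup_edge (hG : IsRealization (decrement α i j) G) (hGij : ¬G.Adj i j)
    (hij : i ≠ j) (hi : 1 ≤ α i) (hj : 1 ≤ α j) : IsRealization α (G ⊔ edge i j) := by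
  intro v
  rw [ncard_neighborSet_sup_edge G hGij hij, hG v, decrement]
  split_ifs with hv
  · rcases hv with rfl | rfl <;> omega
  · rfl

lemma IsRealization.sdiff_edge (hG : IsRealization α G) (hGij : G.Adj i j) :
    IsRealization (decrement α i j) (G \ edge i j) := by
  intro v
  have h := ncard_neighborSet_sdiff_edge G hGij v
  rw [hG v] at h
  rw [decrement]
  split_ifs at h ⊢ <;> omega

lemma IsRealization.exists_adj_not_adj {β : Fin n → ℕ} {p b c : Fin n}
    (hG : IsRealization β G) (hpc : G.Adj p c) (hpb : ¬G.Adj p b) (hbp : b ≠ p) (hd : β c ≤ β b) :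
    ∃ G', IsRealization β G' ∧ G'.Adj p b ∧ ¬G'.Adj p c := by
  obtain ⟨G', hdeg, hpb', hpc'⟩ :=
    G.exists_ncard_neighborSet_eq_adj_not_adj hpc hpb hbp (by rw [hG c, hG b]; exact hd)
  exact ⟨G', fun v => (hdeg v).trans (hG v), hpb', hpc'⟩

lemma exists_isRealization_adj {H : SimpleGraph (Fin n)} (hG : IsRealization α G)
    (hH : IsRealization (decrement α i j) H) (hij : i ≠ j) (hi : 1 ≤ α i) (hj : 1 ≤ α j) :
    ∃ K, IsRealization α K ∧ K.Adj i j := by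
  by_cases hGij : G.Adj i j
  · exact ⟨G, hG, hGij⟩
  rcases em' (H.Adj i j) with hHij | hHij
  · exact ⟨H ⊔ edge i j, hH.sup_edge hHij hij hi hj, by simp [edge_adj, hij]⟩
  -- `i` has one more neighbour in `G` than in `H`
  obtain ⟨c, hic, hHic⟩ : ∃ c ∈ G.neighborSet i, c ∉ H.neighborSet i :=
    Set.exists_mem_notMem_of_ncard_lt_ncard <| by
      rw [hG i, hH i, decrement, if_pos (.inl rfl)]; omega
  have hci : c ≠ i := (G.ne_of_adj hic).symm
  have hcj : c ≠ j := by rintro rfl; exact hGij hic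
  rcases le_or_gt (decrement α i j j) (decrement α i j c) with hd | hd
  · obtain ⟨H', hH', -, hH'ij⟩ := hH.exists_adj_not_adj hHij hHic hci hd
    exact ⟨H' ⊔ edge i j, hH'.sup_edge hH'ij hij hi hj, by simp [edge_adj, hij]⟩
  · obtain ⟨K, hK, hKij, -⟩ := hG.exists_adj_not_adj hic hGij hij.symm (by
      simp only [decrement, hci, hcj, or_self, if_false, or_true, if_true] at hd; omega)
    exact ⟨K, hK, hKij⟩

end Realization

theorem forbidden_iff_decrement_not_graphic_general {n : ℕ} (α : Fin n → ℕ)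
    (hg : Graphic α)
    (i j : Fin n) (hij : i ≠ j) (hi : 1 ≤ α i) (hj : 1 ≤ α j) :
    ForbiddenEdge α i j ↔
      ¬ Graphic (fun v : Fin n => if v = i ∨ v = j then α v - 1 else α v) := by
  obtain ⟨G, hG⟩ := hg
  constructor
  · rintro hforb ⟨H, hH⟩
    obtain ⟨K, hK, hKij⟩ := exists_isRealization_adj hG hH hij hi hj
    exact hforb K hK hKij
  · rintro hnot K hK hKij
    exact hnot ⟨K \ edge i j, hK.sdiff_edge hKij⟩

/-- for a graphic nonincreasing degree sequence `α` (entries at most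
`n-1`) and indices `i ≠ j` with `α i ≥ 1` and `α j ≥ 1`, the edge `{i,j}` is
forbidden for `α` if and only if `⊖_{i,j} α` is not graphic. -/
theorem forbidden_iff_decrement_not_graphic {n : ℕ} (α : Fin n → ℕ)
    (hα : Antitone α) (hb : ∀ v, α v ≤ n - 1) (hg : Graphic α)
    (i j : Fin n) (hij : i ≠ j) (hi : 1 ≤ α i) (hj : 1 ≤ α j) :
    ForbiddenEdge α i j ↔
      ¬ Graphic (fun v : Fin n => if v = i ∨ v = j then α v - 1 else α v) :=
  forbidden_iff_decrement_not_graphic_general α hg i j hij hi hj
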